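/- Let g_1, g_2, g_3, g_4 be the standard orthonormal basis of ℂ^4, let g_± = (1/2)g_1 ± (√3/2)g_2, and define the POVM E_1 = (2/3)|g_1⟩⟨g_1|, E_2 = (2/3)|g_+⟩⟨g_+|, E_3 = (2/3)|g_−⟩⟨g_−|, E_4 = |g_3⟩⟨g_3| + |g_4⟩⟨g_4| (so that Σ_k E_k = I). Let Φ be the QC map on 4×4 complex matrices Φ(ρ) = Σ_{k=1}^4 |g_k⟩⟨g_k| · Tr(ρ E_k). Then Φ is an extreme point of the set of EBT maps on 4×4 complex matrices. -/

import Mathlib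

open Matrix Kronecker BigOperators ComplexOrder

noncomputable section

/-- Blockwise action of `I_n ⊗ Φ` on matrices indexed by `Fin n × Fin d`. -/
def tensorId (n : ℕ) {d e : ℕ}
    (Φ : Matrix (Fin d) (Fin d) ℂ → Matrix (Fin e) (Fin e) ℂ)
    (Γ : Matrix (Fin n × Fin d) (Fin n × Fin d) ℂ) :
    Matrix (Fin n × Fin e) (Fin n × Fin e) ℂ :=
  fun p q => Φ (fun a b => Γ (p.1, a) (q.1, b)) p.2 q.2

/-- A matrix indexed by `Fin n × Fin d` is separable if it is a finite sum of Kronecker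
products of positive semidefinite matrices. -/
def IsSeparableMat {n d : ℕ} (Γ : Matrix (Fin n × Fin d) (Fin n × Fin d) ℂ) : Prop :=
  ∃ (N : ℕ) (A : Fin N → Matrix (Fin n) (Fin n) ℂ)
    (B : Fin N → Matrix (Fin d) (Fin d) ℂ),
    (∀ i, (A i).PosSemidef) ∧ (∀ i, (B i).PosSemidef) ∧ Γ = ∑ i, (A i) ⊗ₖ (B i)

/-- A map on `d × d` matrices is entanglement breaking if `I_n ⊗ Φ` sends every
positive semidefinite matrix to a separable one. -/
def EntBreaking {d : ℕ} (Φ : Matrix (Fin d) (Fin d) ℂ → Matrix (Fin d) (Fin d) ℂ) : Prop :=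
  ∀ n : ℕ, 1 ≤ n → ∀ Γ : Matrix (Fin n × Fin d) (Fin n × Fin d) ℂ,
    Γ.PosSemidef → IsSeparableMat (tensorId n Φ Γ)

/-- Complete positivity: `I_n ⊗ Φ` preserves positive semidefiniteness for all `n ≥ 1`. -/
def CompletelyPositive {d e : ℕ}
    (Φ : Matrix (Fin d) (Fin d) ℂ → Matrix (Fin e) (Fin e) ℂ) : Prop :=
  ∀ n : ℕ, 1 ≤ n → ∀ Γ : Matrix (Fin n × Fin d) (Fin n × Fin d) ℂ,
    Γ.PosSemidef → (tensorId n Φ Γ).PosSemidef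

def TracePreserving {d : ℕ}
    (Φ : Matrix (Fin d) (Fin d) ℂ → Matrix (Fin d) (Fin d) ℂ) : Prop :=
  ∀ X, (Φ X).trace = X.trace

/-- The maximally entangled state `|β⟩⟨β|`. -/
def maxEnt (d : ℕ) : Matrix (Fin d × Fin d) (Fin d × Fin d) ℂ :=
  fun p q => if p.1 = p.2 ∧ q.1 = q.2 then (1 : ℂ) / d else 0

/-- The Choi matrix `(I_d ⊗ Φ)(|β⟩⟨β|)`. -/
def choiMatrix {d : ℕ} (Φ : Matrix (Fin d) (Fin d) ℂ → Matrix (Fin d) (Fin d) ℂ) :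
    Matrix (Fin d × Fin d) (Fin d × Fin d) ℂ :=
  tensorId d Φ (maxEnt d)

/-- The rank-one matrix `|v⟩⟨v|`. -/
def rankOne {d : ℕ} (v : Fin d → ℂ) : Matrix (Fin d) (Fin d) ℂ :=
  Matrix.vecMulVec v (star v)

/-- Completely positive trace-preserving (linear) maps. -/
def IsCPTP {d : ℕ} (Φ : Matrix (Fin d) (Fin d) ℂ → Matrix (Fin d) (Fin d) ℂ) : Prop :=
  IsLinearMap ℂ Φ ∧ CompletelyPositive Φ ∧ TracePreserving Φ

/-- EBT maps: completely positive, trace-preserving, entanglement-breaking linear maps. -/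
def IsEBT {d : ℕ} (Φ : Matrix (Fin d) (Fin d) ℂ → Matrix (Fin d) (Fin d) ℂ) : Prop :=
  IsCPTP Φ ∧ EntBreaking Φ

/-- `Φ` is an extreme point of the set of maps satisfying `P`. -/
def IsExtremePointOf {d : ℕ}
    (P : (Matrix (Fin d) (Fin d) ℂ → Matrix (Fin d) (Fin d) ℂ) → Prop)
    (Φ : Matrix (Fin d) (Fin d) ℂ → Matrix (Fin d) (Fin d) ℂ) : Prop :=
  P Φ ∧ ∀ Φ₁ Φ₂, P Φ₁ → P Φ₂ → ∀ a : ℝ, 0 < a → a < 1 →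
    Φ = (fun ρ => (a : ℂ) • Φ₁ ρ + ((1 - a : ℝ) : ℂ) • Φ₂ ρ) →
    Φ₁ = Φ ∧ Φ₂ = Φ

/-- The standard orthonormal basis `g_1, …, g_4` of `ℂ⁴` (indexed by `Fin 4`). -/
def stdBasis4 (k : Fin 4) : Fin 4 → ℂ :=
  fun a => if a = k then 1 else 0

/-- `g_+ = (1/2) g_1 + (√3/2) g_2`. -/
def gPlus : Fin 4 → ℂ := ![1 / 2, ((Real.sqrt 3 : ℝ) : ℂ) / 2, 0, 0]

/-- `g_- = (1/2) g_1 - (√3/2) g_2`. -/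
def gMinus : Fin 4 → ℂ := ![1 / 2, -(((Real.sqrt 3 : ℝ) : ℂ) / 2), 0, 0]

/-- The POVM consisting of a trine on `span{g_1, g_2}` together with the projection
onto `span{g_3, g_4}`. -/
def trinePOVM : Fin 4 → Matrix (Fin 4) (Fin 4) ℂ :=
  ![(2 / 3 : ℂ) • rankOne (stdBasis4 0),
    (2 / 3 : ℂ) • rankOne gPlus,
    (2 / 3 : ℂ) • rankOne gMinus,
    rankOne (stdBasis4 2) + rankOne (stdBasis4 3)]

/-- The QC map `Φ(ρ) = ∑ k |g_k⟩⟨g_k| Tr(ρ E_k)` built from the trine POVM. -/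
def trineChannel : Matrix (Fin 4) (Fin 4) ℂ → Matrix (Fin 4) (Fin 4) ℂ :=
  fun ρ => ∑ k : Fin 4, ((ρ * trinePOVM k).trace) • rankOne (stdBasis4 k)

set_option linter.unusedSectionVars false
section Aux
open Matrix

variable {n m : Type*} [Fintype n] [Fintype m] [DecidableEq n] [DecidableEq m]

lemma kron_conjT (A : Matrix n n ℂ) (B : Matrix m m ℂ) : (A ⊗ₖ B)ᴴ = Aᴴ ⊗ₖ Bᴴ := by
  ext p q
  simp [conjTranspose_apply, kroneckerMap_apply]

open scoped MatrixOrder in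
lemma psd_mulVec_zero {M : Matrix n n ℂ} (hM : M.PosSemidef) {x : n → ℂ}
    (h : star x ⬝ᵥ M.mulVec x = 0) : M.mulVec x = 0 := by
  obtain ⟨S, hS⟩ := CStarAlgebra.nonneg_iff_eq_star_mul_self.mp hM.nonneg
  rw [star_eq_conjTranspose] at hS
  have h2 : star (S.mulVec x) ⬝ᵥ (S.mulVec x) = 0 := by
    calc star (S.mulVec x) ⬝ᵥ S.mulVec x
        = (star x ᵥ* Sᴴ) ⬝ᵥ S.mulVec x := by rw [star_mulVec]
      _ = star x ⬝ᵥ (Sᴴ * S).mulVec x := by rw [← dotProduct_mulVec, mulVec_mulVec]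
      _ = 0 := by rw [← hS, h]
  have h3 : S.mulVec x = 0 := dotProduct_star_self_eq_zero.mp h2
  calc M.mulVec x = (Sᴴ * S).mulVec x := by rw [hS]
    _ = Sᴴ.mulVec (S.mulVec x) := by rw [mulVec_mulVec]
    _ = 0 := by rw [h3, mulVec_zero]

lemma psd_sum {ι : Type*} (s : Finset ι) (f : ι → Matrix n n ℂ)
    (h : ∀ i ∈ s, (f i).PosSemidef) : (∑ i ∈ s, f i).PosSemidef := by
  classical
  induction s using Finset.induction_on with
  | empty => simpa using Matrix.PosSemidef.zero
  | insert a s' hx ih =>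
      rw [Finset.sum_insert hx]
      exact (h _ (by simp)).add (ih fun i hi => h i (by simp [hi]))

lemma psd_vecMulVec (v : n → ℂ) : (vecMulVec v (star v)).PosSemidef := by
  refine .of_dotProduct_mulVec_nonneg ?_ fun x => ?_
  · ext i j
    simp [conjTranspose_apply, vecMulVec_apply, mul_comm]
  · have h : star x ⬝ᵥ (vecMulVec v (star v)).mulVec x
        = star (star v ⬝ᵥ x) * (star v ⬝ᵥ x) := by
      simp only [dotProduct, mulVec, vecMulVec_apply, Pi.star_apply, star_sum, star_mul',
        star_star, Finset.sum_mul, Finset.mul_sum]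
      rw [Finset.sum_comm]
      exact Finset.sum_congr rfl fun i _ => Finset.sum_congr rfl fun j _ => by ring
    rw [h]
    exact star_mul_self_nonneg _

lemma psd_kron {A : Matrix n n ℂ} {B : Matrix m m ℂ} (hA : A.PosSemidef) (hB : B.PosSemidef) :
    (A ⊗ₖ B).PosSemidef := by
  exact hA.kronecker hB

lemma psd_smul {M : Matrix n n ℂ} (hM : M.PosSemidef) {c : ℝ} (hc : 0 ≤ c) :
    (((c : ℝ) : ℂ) • M).PosSemidef := by
  refine .of_dotProduct_mulVec_nonneg ?_ fun x => ?_
  · show (((c : ℝ) : ℂ) • M)ᴴ = ((c : ℝ) : ℂ) • M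
    rw [conjTranspose_smul, hM.1.eq]
    congr 1
    simp [Complex.star_def, Complex.conj_ofReal]
  · rw [smul_mulVec, dotProduct_smul, smul_eq_mul]
    exact mul_nonneg (by exact_mod_cast hc) (hM.dotProduct_mulVec_nonneg x)

end Aux
section Aux2
open Matrix

/-- `compress Γ v i j = ∑ a b, Γ (i,a) (j,b) v b (v a)^*` -/
def compress {n d : ℕ} (Γ : Matrix (Fin n × Fin d) (Fin n × Fin d) ℂ) (v : Fin d → ℂ) :
    Matrix (Fin n) (Fin n) ℂ :=
  fun i j => ∑ a : Fin d, ∑ b : Fin d, Γ (i, a) (j, b) * v b * star (v a)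

lemma psd_compress {n d : ℕ} {Γ : Matrix (Fin n × Fin d) (Fin n × Fin d) ℂ}
    (hΓ : Γ.PosSemidef) (v : Fin d → ℂ) : (compress Γ v).PosSemidef := by
  refine .of_dotProduct_mulVec_nonneg ?_ fun x => ?_
  · ext i j
    simp only [conjTranspose_apply, compress, star_sum]
    rw [Finset.sum_comm]
    refine Finset.sum_congr rfl fun a _ => Finset.sum_congr rfl fun b _ => ?_
    simp only [star_mul', star_star, hΓ.1.apply]
    ring
  · set y : (Fin n × Fin d) → ℂ := fun p => x p.1 * v p.2 with hy
    have h : star x ⬝ᵥ (compress Γ v).mulVec x = star y ⬝ᵥ Γ.mulVec y := by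
      simp only [dotProduct, mulVec, compress, Fintype.sum_prod_type, Pi.star_apply, hy,
        star_mul', Finset.mul_sum, Finset.sum_mul]
      refine Finset.sum_congr rfl fun i _ => ?_
      rw [Finset.sum_comm]
      refine Finset.sum_congr rfl fun a _ => Finset.sum_congr rfl fun j _ =>
        Finset.sum_congr rfl fun b _ => by ring
    rw [h]
    exact hΓ.dotProduct_mulVec_nonneg y

/-- test vector `u ⊗ e_k` -/
def tvec (u : Fin 4 → ℂ) (k : Fin 4) : Fin 4 × Fin 4 → ℂ :=
  fun p => u p.1 * (if p.2 = k then 1 else 0)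

lemma quad_kron_tvec (A B : Matrix (Fin 4) (Fin 4) ℂ) (u : Fin 4 → ℂ) (k : Fin 4) :
    star (tvec u k) ⬝ᵥ (A ⊗ₖ B).mulVec (tvec u k) = (star u ⬝ᵥ A.mulVec u) * B k k := by
  simp only [dotProduct, mulVec, Fintype.sum_prod_type, tvec, kroneckerMap_apply,
    Pi.star_apply, star_mul', apply_ite, star_one, star_zero, mul_ite, ite_mul,
    mul_one, mul_zero, zero_mul, one_mul, Finset.mul_sum, Finset.sum_mul,
    Finset.sum_ite_eq', Finset.mem_univ, if_true, Finset.sum_ite_irrel, Finset.sum_const_zero]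
  refine Finset.sum_congr rfl fun i _ => ?_
  exact Finset.sum_congr rfl fun j _ => by ring

lemma mulVec_kron_tvec (A B : Matrix (Fin 4) (Fin 4) ℂ) (u : Fin 4 → ℂ) (k : Fin 4)
    (i c : Fin 4) :
    ((A ⊗ₖ B).mulVec (tvec u k)) (i, c) = (A.mulVec u) i * B c k := by
  simp only [mulVec, dotProduct, Fintype.sum_prod_type, tvec, kroneckerMap_apply,
    mul_ite, ite_mul, mul_one, mul_zero, zero_mul, Finset.sum_ite_eq', Finset.mem_univ,
    if_true, Finset.sum_ite_irrel, Finset.sum_const_zero]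
  rw [Finset.sum_mul]
  refine Finset.sum_congr rfl fun j _ => by ring

end Aux2
section Aux3
open Matrix

def c3 : ℂ := ((Real.sqrt 3 : ℝ) : ℂ)

lemma c3_mul_c3 : c3 * c3 = 3 := by
  rw [c3, ← Complex.ofReal_mul, Real.mul_self_sqrt (by norm_num : (0:ℝ) ≤ 3)]
  norm_num

lemma star_c3 : star c3 = c3 := by
  simp [c3, Complex.star_def, Complex.conj_ofReal]

lemma c3_ne : c3 ≠ 0 := by
  intro h
  have := c3_mul_c3
  rw [h, mul_zero] at this
  norm_num at this

lemma povm_sum : ∑ k : Fin 4, trinePOVM k = 1 := by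
  rw [Fin.sum_univ_four]
  ext i j
  fin_cases i <;> fin_cases j <;>
    simp [trinePOVM, rankOne, vecMulVec_apply, stdBasis4, gPlus, gMinus, Matrix.one_apply,
      Matrix.add_apply, Matrix.smul_apply, smul_eq_mul, Complex.star_def, map_div₀,
      Complex.conj_ofReal, Matrix.vecHead, Matrix.vecTail, -Matrix.cons_vecMulVec, -Matrix.vecMulVec_cons]
  all_goals try ring_nf
  all_goals try simp [← Complex.ofReal_pow, Real.sq_sqrt (by norm_num : (0:ℝ) ≤ 3)]
  all_goals try ring

lemma trine_linear : IsLinearMap ℂ trineChannel := by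
  constructor
  · intro x y
    unfold trineChannel
    rw [← Finset.sum_add_distrib]
    exact Finset.sum_congr rfl fun k _ => by rw [add_mul, trace_add, add_smul]
  · intro c x
    unfold trineChannel
    rw [Finset.smul_sum]
    exact Finset.sum_congr rfl fun k _ => by
      rw [smul_mul_assoc, trace_smul, smul_assoc]

lemma trace_rankOne (v : Fin 4 → ℂ) : (rankOne v).trace = ∑ a, v a * star (v a) := by
  simp [rankOne, Matrix.trace, Matrix.diag, vecMulVec_apply]

lemma trine_tp : TracePreserving trineChannel := by
  intro X
  unfold trineChannel
  rw [trace_sum]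
  have h1 : ∀ k : Fin 4, ((X * trinePOVM k).trace • rankOne (stdBasis4 k)).trace
      = (X * trinePOVM k).trace := by
    intro k
    rw [trace_smul, smul_eq_mul]
    have h2 : (rankOne (stdBasis4 k)).trace = 1 := by
      rw [trace_rankOne]
      simp [stdBasis4, apply_ite, ite_mul]
    rw [h2, mul_one]
  rw [Finset.sum_congr rfl fun k _ => h1 k, ← trace_sum, ← Finset.mul_sum, povm_sum, mul_one]
end Aux3
section Aux4
open Matrix

lemma trace_mul_rankOne {n : ℕ} (Γ : Matrix (Fin n × Fin 4) (Fin n × Fin 4) ℂ)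
    (i j : Fin n) (v : Fin 4 → ℂ) :
    ((Matrix.of fun a b => Γ (i, a) (j, b)) * rankOne v).trace
      = compress Γ v i j := by
  simp only [Matrix.trace, Matrix.diag, Matrix.mul_apply, rankOne, vecMulVec_apply, compress,
    Pi.star_apply, Matrix.of_apply]
  exact Finset.sum_congr rfl fun a _ => Finset.sum_congr rfl fun b _ => by ring

lemma trine_decomp {n : ℕ} (Γ : Matrix (Fin n × Fin 4) (Fin n × Fin 4) ℂ) :
    tensorId n trineChannel Γ =
      ((2/3 : ℂ) • compress Γ (stdBasis4 0)) ⊗ₖ rankOne (stdBasis4 0)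
      + ((2/3 : ℂ) • compress Γ gPlus) ⊗ₖ rankOne (stdBasis4 1)
      + ((2/3 : ℂ) • compress Γ gMinus) ⊗ₖ rankOne (stdBasis4 2)
      + (compress Γ (stdBasis4 2)) ⊗ₖ rankOne (stdBasis4 3)
      + (compress Γ (stdBasis4 3)) ⊗ₖ rankOne (stdBasis4 3) := by
  ext p q
  obtain ⟨i, a⟩ := p
  obtain ⟨j, b⟩ := q
  show trineChannel (Matrix.of fun a b => Γ (i, a) (j, b)) a b = _
  simp only [trineChannel, Matrix.sum_apply, Matrix.smul_apply, smul_eq_mul, Fin.sum_univ_four,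
    Matrix.add_apply, kroneckerMap_apply]
  simp only [trinePOVM, Matrix.cons_val_zero, Matrix.cons_val_one, Matrix.head_cons,
    Matrix.cons_val_two, Matrix.tail_cons, Matrix.cons_val_three]
  rw [mul_smul_comm, trace_smul, mul_smul_comm, trace_smul, mul_smul_comm, trace_smul,
    mul_add, trace_add]
  rw [trace_mul_rankOne, trace_mul_rankOne, trace_mul_rankOne, trace_mul_rankOne,
    trace_mul_rankOne]
  simp only [smul_eq_mul, Matrix.smul_apply]
  ring

def Cmat : Matrix (Fin 4 × Fin 4) (Fin 4 × Fin 4) ℂ :=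
  fun p q => if p.2 = q.2 then (4⁻¹ : ℂ) * trinePOVM p.2 q.1 p.1 else 0

lemma maxEnt_block (i j : Fin 4) :
    (Matrix.of fun a b => maxEnt 4 (i, a) (j, b))
      = (4⁻¹ : ℂ) • Matrix.single i j 1 := by
  ext a b
  simp only [maxEnt, Matrix.single, Matrix.smul_apply, Matrix.of_apply, smul_eq_mul]
  norm_num

lemma choi_entry {Ψ : Matrix (Fin 4) (Fin 4) ℂ → Matrix (Fin 4) (Fin 4) ℂ}
    (hΨ : IsLinearMap ℂ Ψ) (i j a b : Fin 4) :
    tensorId 4 Ψ (maxEnt 4) (i, a) (j, b) = 4⁻¹ * Ψ (Matrix.single i j 1) a b := by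
  show Ψ (Matrix.of fun a' b' => maxEnt 4 (i, a') (j, b')) a b = _
  rw [maxEnt_block, hΨ.map_smul]
  simp [Matrix.smul_apply, smul_eq_mul]

lemma linmap_eq_of_choi_eq {Ψ₁ Ψ₂ : Matrix (Fin 4) (Fin 4) ℂ → Matrix (Fin 4) (Fin 4) ℂ}
    (h1 : IsLinearMap ℂ Ψ₁) (h2 : IsLinearMap ℂ Ψ₂)
    (h : tensorId 4 Ψ₁ (maxEnt 4) = tensorId 4 Ψ₂ (maxEnt 4)) : Ψ₁ = Ψ₂ := by
  have hstd : ∀ i j : Fin 4, Ψ₁ (Matrix.single i j 1) = Ψ₂ (Matrix.single i j 1) := by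
    intro i j
    ext a b
    have e1 := choi_entry h1 i j a b
    have e2 := choi_entry h2 i j a b
    rw [h] at e1
    rw [e2] at e1
    exact mul_left_cancel₀ (by norm_num) e1.symm
  funext ρ
  have hρ : ρ = ∑ i : Fin 4, ∑ j : Fin 4, (ρ i j) • Matrix.single i j (1 : ℂ) := by
    conv_lhs => rw [matrix_eq_sum_single ρ]
    refine Finset.sum_congr rfl fun i _ => Finset.sum_congr rfl fun j _ => ?_
    rw [smul_single, smul_eq_mul, mul_one]
  rw [hρ]
  let L1 := IsLinearMap.mk' Ψ₁ h1
  let L2 := IsLinearMap.mk' Ψ₂ h2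
  show L1 _ = L2 _
  rw [map_sum, map_sum]
  refine Finset.sum_congr rfl fun i _ => ?_
  rw [map_sum, map_sum]
  refine Finset.sum_congr rfl fun j _ => ?_
  rw [_root_.map_smul, _root_.map_smul]
  show (ρ i j) • Ψ₁ _ = (ρ i j) • Ψ₂ _
  rw [hstd]

lemma maxEnt_psd : (maxEnt 4).PosSemidef := by
  have h : maxEnt 4 = ((4⁻¹ : ℝ) : ℂ) •
      vecMulVec (fun p : Fin 4 × Fin 4 => if p.1 = p.2 then 1 else 0)
        (star (fun p : Fin 4 × Fin 4 => if p.1 = p.2 then 1 else 0)) := by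
    ext p q
    simp only [maxEnt, Matrix.smul_apply, vecMulVec_apply, Pi.star_apply, apply_ite, star_one,
      star_zero, smul_eq_mul, mul_ite, ite_mul, mul_one, mul_zero, one_mul, zero_mul]
    split_ifs with h1 h2 h3 <;> norm_num <;> tauto
  rw [h]
  exact psd_smul (psd_vecMulVec _) (by norm_num)

lemma trine_ebt : IsEBT trineChannel := by
  refine ⟨⟨trine_linear, ?_, trine_tp⟩, ?_⟩
  · intro n hn Γ hΓ
    rw [trine_decomp]
    have h23 : (2/3 : ℂ) = (((2/3 : ℝ) : ℝ) : ℂ) := by norm_num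
    refine Matrix.PosSemidef.add (Matrix.PosSemidef.add (Matrix.PosSemidef.add
      (Matrix.PosSemidef.add ?_ ?_) ?_) ?_) ?_ <;>
    · apply psd_kron
      · first
          | exact psd_compress hΓ _
          | (rw [h23]; exact psd_smul (psd_compress hΓ _) (by norm_num))
      · exact psd_vecMulVec _
  · intro n hn Γ hΓ
    refine ⟨5, ![(2/3 : ℂ) • compress Γ (stdBasis4 0), (2/3 : ℂ) • compress Γ gPlus,
      (2/3 : ℂ) • compress Γ gMinus, compress Γ (stdBasis4 2), compress Γ (stdBasis4 3)],
      ![rankOne (stdBasis4 0), rankOne (stdBasis4 1), rankOne (stdBasis4 2),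
        rankOne (stdBasis4 3), rankOne (stdBasis4 3)], ?_, ?_, ?_⟩
    · intro m
      have h23 : (2/3 : ℂ) = (((2/3 : ℝ) : ℝ) : ℂ) := by norm_num
      fin_cases m <;>
        first
          | exact psd_compress hΓ _
          | (show ((2/3:ℂ) • compress Γ _).PosSemidef
             rw [h23]; exact psd_smul (psd_compress hΓ _) (by norm_num))
    · intro m
      fin_cases m <;> exact psd_vecMulVec _
    · rw [trine_decomp]
      rw [Fin.sum_univ_five]
      simp only [Matrix.cons_val_zero, Matrix.cons_val_one, Matrix.head_cons,
        Matrix.cons_val_two, Matrix.tail_cons, Matrix.cons_val_three, Matrix.cons_val_four]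
      try abel

end Aux4
section Aux5
open Matrix

lemma trace_stdBasis_mul (i j : Fin 4) (E : Matrix (Fin 4) (Fin 4) ℂ) :
    (Matrix.single i j 1 * E).trace = E j i := by
  simp [Matrix.trace, Matrix.diag, Matrix.mul_apply, Matrix.single, ite_and, ite_mul, one_mul,
    zero_mul, Finset.sum_ite_eq, Finset.sum_ite_irrel, Finset.sum_const_zero]

lemma Ceq : tensorId 4 trineChannel (maxEnt 4) = Cmat := by
  ext p q
  obtain ⟨i, a⟩ := p
  obtain ⟨j, b⟩ := q
  rw [choi_entry trine_linear i j a b]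
  simp only [trineChannel, Matrix.sum_apply, Matrix.smul_apply, smul_eq_mul, Fin.sum_univ_four,
    trace_stdBasis_mul, rankOne, vecMulVec_apply, Pi.star_apply, stdBasis4, Cmat]
  fin_cases a <;> fin_cases b <;>
    simp [apply_ite, mul_ite, ite_mul, mul_one, mul_zero, zero_mul, one_mul] <;> ring

lemma quad_Cmat (u : Fin 4 → ℂ) (k : Fin 4) :
    star (tvec u k) ⬝ᵥ Cmat.mulVec (tvec u k)
      = 4⁻¹ * ∑ i, ∑ j, star (u i) * trinePOVM k j i * u j := by
  simp only [dotProduct, mulVec, Fintype.sum_prod_type, tvec, Cmat, Pi.star_apply, star_mul',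
    apply_ite, star_one, star_zero, mul_ite, ite_mul, mul_one, mul_zero, zero_mul, one_mul,
    Finset.sum_ite_irrel, Finset.sum_const_zero, Finset.sum_ite_eq', Finset.sum_ite_eq,
    Finset.mem_univ, if_true]
  simp only [Finset.mul_sum]
  refine Finset.sum_congr rfl fun i _ => Finset.sum_congr rfl fun j _ => by ring

def wP : Fin 4 → ℂ := ![c3, -1, 0, 0]
def wM : Fin 4 → ℂ := ![c3, 1, 0, 0]

lemma qz0 (l : Fin 4) (hl : l ≠ 0) :
    star (tvec (stdBasis4 l) 0) ⬝ᵥ Cmat.mulVec (tvec (stdBasis4 l) 0) = 0 := by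
  rw [quad_Cmat]
  fin_cases l <;> simp_all <;>
  · simp [Fin.sum_univ_four, trinePOVM, rankOne, vecMulVec_apply, stdBasis4, gPlus, gMinus,
      Matrix.vecHead, Matrix.vecTail]

lemma qz3 (l : Fin 4) (hl : l = 0 ∨ l = 1) :
    star (tvec (stdBasis4 l) 3) ⬝ᵥ Cmat.mulVec (tvec (stdBasis4 l) 3) = 0 := by
  rw [quad_Cmat]
  rcases hl with rfl | rfl <;>
  · simp [Fin.sum_univ_four, trinePOVM, rankOne, vecMulVec_apply, stdBasis4, gPlus, gMinus,
      Matrix.vecHead, Matrix.vecTail]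

lemma qz12e (l : Fin 4) (hl : l = 2 ∨ l = 3) (k : Fin 4) (hk : k = 1 ∨ k = 2) :
    star (tvec (stdBasis4 l) k) ⬝ᵥ Cmat.mulVec (tvec (stdBasis4 l) k) = 0 := by
  rw [quad_Cmat]
  rcases hl with rfl | rfl <;> rcases hk with rfl | rfl <;>
  · simp [Fin.sum_univ_four, trinePOVM, rankOne, vecMulVec_apply, stdBasis4, gPlus, gMinus,
      Matrix.vecHead, Matrix.vecTail, -Matrix.cons_vecMulVec, -Matrix.vecMulVec_cons]

lemma qzP : star (tvec wP 1) ⬝ᵥ Cmat.mulVec (tvec wP 1) = 0 := by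
  rw [quad_Cmat]
  simp [Fin.sum_univ_four, trinePOVM, rankOne, vecMulVec_apply, wP, gPlus,
    Matrix.vecHead, Matrix.vecTail, Complex.star_def, map_div₀, Complex.conj_ofReal, c3,
    -Matrix.cons_vecMulVec, -Matrix.vecMulVec_cons]
  ring

lemma qzM : star (tvec wM 2) ⬝ᵥ Cmat.mulVec (tvec wM 2) = 0 := by
  rw [quad_Cmat]
  simp [Fin.sum_univ_four, trinePOVM, rankOne, vecMulVec_apply, wM, gMinus,
    Matrix.vecHead, Matrix.vecTail, Complex.star_def, map_div₀, Complex.conj_ofReal, c3,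
    -Matrix.cons_vecMulVec, -Matrix.vecMulVec_cons]
  ring

end Aux5
section Aux6
open Matrix

lemma quad_sum {ι : Type*} [Fintype ι] {n : Type*} [Fintype n]
    (f : ι → Matrix n n ℂ) (x : n → ℂ) :
    star x ⬝ᵥ (∑ m, f m).mulVec x = ∑ m, star x ⬝ᵥ (f m).mulVec x := by
  have h1 : (∑ m, f m).mulVec x = ∑ m, (f m).mulVec x := by
    ext c
    simp only [mulVec, dotProduct, Matrix.sum_apply, Finset.sum_mul, Finset.sum_apply]
    rw [Finset.sum_comm]
  rw [h1]
  simp only [dotProduct, Finset.sum_apply, Finset.mul_sum]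
  rw [Finset.sum_comm]

lemma dichotomy {N : ℕ} {A B : Fin N → Matrix (Fin 4) (Fin 4) ℂ}
    (hA : ∀ m, (A m).PosSemidef) (hB : ∀ m, (B m).PosSemidef)
    {D1 D2 : Matrix (Fin 4 × Fin 4) (Fin 4 × Fin 4) ℂ} (hD2 : D2.PosSemidef)
    {a : ℝ} (ha0 : 0 < a) (ha1 : a < 1)
    (hC : ∀ p q, Cmat p q = (a : ℂ) * D1 p q + ((1 - a : ℝ) : ℂ) * D2 p q)
    (hD1 : D1 = ∑ m, A m ⊗ₖ B m)
    (u : Fin 4 → ℂ) (k : Fin 4)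
    (hq : star (tvec u k) ⬝ᵥ Cmat.mulVec (tvec u k) = 0)
    (m : Fin N) :
    (A m).mulVec u = 0 ∨ ∀ c, (B m) c k = 0 := by
  set x := tvec u k with hx
  have hD1psd : D1.PosSemidef := by
    rw [hD1]; exact psd_sum _ _ fun m' _ => psd_kron (hA m') (hB m')
  have hCm : Cmat = (fun p q => (a : ℂ) * D1 p q + ((1 - a : ℝ) : ℂ) * D2 p q :
      Matrix (Fin 4 × Fin 4) (Fin 4 × Fin 4) ℂ) := by
    ext p q; exact hC p q
  have hsplit : (a : ℂ) * (star x ⬝ᵥ D1.mulVec x) + ((1 - a : ℝ) : ℂ) * (star x ⬝ᵥ D2.mulVec x)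
      = 0 := by
    rw [← hq, hCm]
    simp only [mulVec, dotProduct, Finset.mul_sum]
    rw [← Finset.sum_add_distrib]
    refine Finset.sum_congr rfl fun p _ => ?_
    simp only [Finset.mul_sum, ← Finset.sum_add_distrib]
    refine (Finset.sum_congr rfl fun q _ => by ring).symm
  have n1 : 0 ≤ (a : ℂ) * (star x ⬝ᵥ D1.mulVec x) :=
    mul_nonneg (by exact_mod_cast ha0.le) (hD1psd.dotProduct_mulVec_nonneg x)
  have n2 : 0 ≤ ((1 - a : ℝ) : ℂ) * (star x ⬝ᵥ D2.mulVec x) :=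
    mul_nonneg (by
      rw [Complex.zero_le_real]
      linarith) (hD2.dotProduct_mulVec_nonneg x)
  have h1 : (a : ℂ) * (star x ⬝ᵥ D1.mulVec x) = 0 :=
    ((add_eq_zero_iff_of_nonneg n1 n2).mp hsplit).1
  have hq1 : star x ⬝ᵥ D1.mulVec x = 0 := by
    rcases mul_eq_zero.mp h1 with h | h
    · exact absurd h (by exact_mod_cast ha0.ne')
    · exact h
  rw [hD1, quad_sum] at hq1
  have hterm : star x ⬝ᵥ (A m ⊗ₖ B m).mulVec x = 0 := by
    have hnn : ∀ m' ∈ Finset.univ, (0:ℂ) ≤ star x ⬝ᵥ (A m' ⊗ₖ B m').mulVec x :=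
      fun m' _ => (psd_kron (hA m') (hB m')).dotProduct_mulVec_nonneg x
    exact (Finset.sum_eq_zero_iff_of_nonneg hnn).mp hq1 m (Finset.mem_univ m)
  rw [hx, quad_kron_tvec] at hterm
  rcases mul_eq_zero.mp hterm with h | h
  · exact Or.inl (psd_mulVec_zero (hA m) h)
  · right
    have hcol : (B m).mulVec (fun c => if c = k then 1 else 0) = 0 := by
      apply psd_mulVec_zero (hB m)
      have : star (fun c => if c = k then (1:ℂ) else 0) ⬝ᵥ
          (B m).mulVec (fun c => if c = k then 1 else 0) = (B m) k k := by
        simp [dotProduct, mulVec, apply_ite, mul_ite, ite_mul, Finset.sum_ite_eq',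
          Finset.sum_ite_irrel, Finset.sum_const_zero]
      rw [this, h]
    intro c
    have h2 := congrFun hcol c
    simpa [mulVec, dotProduct, mul_ite, mul_one, mul_zero, Finset.sum_ite_eq',
      Finset.mem_univ] using h2

end Aux6
section Aux7
open Matrix

lemma perterm (P Q : Matrix (Fin 4) (Fin 4) ℂ)
    (hermP : ∀ i j, star (P j i) = P i j) (hermQ : ∀ i j, star (Q j i) = Q i j)
    (h01 : (∀ i, P i 1 = 0) ∨ (∀ c, Q c 0 = 0))
    (h02 : (∀ i, P i 2 = 0) ∨ (∀ c, Q c 0 = 0))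
    (h03 : (∀ i, P i 3 = 0) ∨ (∀ c, Q c 0 = 0))
    (h1P : (∀ i, c3 * P i 0 - P i 1 = 0) ∨ (∀ c, Q c 1 = 0))
    (h12 : (∀ i, P i 2 = 0) ∨ (∀ c, Q c 1 = 0))
    (h13 : (∀ i, P i 3 = 0) ∨ (∀ c, Q c 1 = 0))
    (h2M : (∀ i, c3 * P i 0 + P i 1 = 0) ∨ (∀ c, Q c 2 = 0))
    (h22 : (∀ i, P i 2 = 0) ∨ (∀ c, Q c 2 = 0))
    (h23 : (∀ i, P i 3 = 0) ∨ (∀ c, Q c 2 = 0))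
    (h30 : (∀ i, P i 0 = 0) ∨ (∀ c, Q c 3 = 0))
    (h31 : (∀ i, P i 1 = 0) ∨ (∀ c, Q c 3 = 0)) :
    (∀ i j a b, a ≠ b → P i j * Q a b = 0) ∧
    (∀ i j, ¬(i = 0 ∧ j = 0) → P i j * Q 0 0 = 0) ∧
    ((∀ i j, (j = 2 ∨ j = 3 ∨ i = 2 ∨ i = 3) → P i j * Q 1 1 = 0) ∧
      (∀ i, P i 1 * Q 1 1 = c3 * (P i 0 * Q 1 1)) ∧
      (∀ j, P 1 j * Q 1 1 = c3 * (P 0 j * Q 1 1))) ∧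
    ((∀ i j, (j = 2 ∨ j = 3 ∨ i = 2 ∨ i = 3) → P i j * Q 2 2 = 0) ∧
      (∀ i, P i 1 * Q 2 2 = -(c3 * (P i 0 * Q 2 2))) ∧
      (∀ j, P 1 j * Q 2 2 = -(c3 * (P 0 j * Q 2 2)))) ∧
    (∀ i j, (j = 0 ∨ j = 1 ∨ i = 0 ∨ i = 1) → P i j * Q 3 3 = 0) := by
  classical
  -- column-zero facts transfer to all entries via hermiticity of P
  have row_of_col : ∀ l : Fin 4, (∀ i, P i l = 0) → ∀ j, P l j = 0 := by
    intro l hl j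
    rw [← hermP l j, hl j, star_zero]
  -- P ≡ 0 when it kills the kernels of two distinct POVM elements
  have PZ : ∀ a b : Fin 4, a ≠ b → ¬(∀ c, Q c a = 0) → ¬(∀ c, Q c b = 0) →
      ∀ i j, P i j = 0 := by
    have pz01 : (∀ i, P i 1 = 0) → (∀ i, P i 2 = 0) → (∀ i, P i 3 = 0) →
        (∀ i, c3 * P i 0 - P i 1 = 0) → ∀ i j, P i j = 0 := by
      intro p1 p2 p3 r i j
      have h0 : P i 0 = 0 := by
        have h := r i
        rw [p1 i, sub_zero] at h
        exact (mul_eq_zero.mp h).resolve_left c3_ne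
      fin_cases j
      · exact h0
      · exact p1 i
      · exact p2 i
      · exact p3 i
    have pz02 : (∀ i, P i 1 = 0) → (∀ i, P i 2 = 0) → (∀ i, P i 3 = 0) →
        (∀ i, c3 * P i 0 + P i 1 = 0) → ∀ i j, P i j = 0 := by
      intro p1 p2 p3 r i j
      have h0 : P i 0 = 0 := by
        have h := r i
        rw [p1 i, add_zero] at h
        exact (mul_eq_zero.mp h).resolve_left c3_ne
      fin_cases j
      · exact h0
      · exact p1 i
      · exact p2 i
      · exact p3 i
    have pz12 : (∀ i, c3 * P i 0 - P i 1 = 0) → (∀ i, c3 * P i 0 + P i 1 = 0) →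
        (∀ i, P i 2 = 0) → (∀ i, P i 3 = 0) → ∀ i j, P i j = 0 := by
      intro rP rM p2 p3 i j
      have h0 : P i 0 = 0 := by
        have h := rP i
        have h' := rM i
        have h2 : c3 * P i 0 = 0 := by
          have : (2 : ℂ) * (c3 * P i 0) = 0 := by linear_combination h + h'
          have h4 := mul_eq_zero.mp this
          rcases h4 with h4 | h4
          · norm_num at h4
          · exact h4
        exact (mul_eq_zero.mp h2).resolve_left c3_ne
      have h1 : P i 1 = 0 := by
        have h := rP i
        rw [h0, mul_zero, zero_sub, neg_eq_zero] at h
        exact h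
      fin_cases j
      · exact h0
      · exact h1
      · exact p2 i
      · exact p3 i
    have pzK3 : (∀ i, P i 0 = 0) → (∀ i, P i 1 = 0) → (∀ i, P i 2 = 0) → (∀ i, P i 3 = 0) →
        ∀ i j, P i j = 0 := by
      intro p0 p1 p2 p3 i j
      fin_cases j
      · exact p0 i
      · exact p1 i
      · exact p2 i
      · exact p3 i
    intro a b hab na nb
    fin_cases a <;> fin_cases b
    -- (0,0)
    · exact absurd rfl hab
    -- (0,1)
    · exact pz01 (h01.resolve_right na) (h02.resolve_right na) (h03.resolve_right na)
        (h1P.resolve_right nb)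
    -- (0,2)
    · exact pz02 (h01.resolve_right na) (h02.resolve_right na) (h03.resolve_right na)
        (h2M.resolve_right nb)
    -- (0,3)
    · exact pzK3 (h30.resolve_right nb) (h01.resolve_right na) (h02.resolve_right na)
        (h03.resolve_right na)
    -- (1,0)
    · exact pz01 (h01.resolve_right nb) (h02.resolve_right nb) (h03.resolve_right nb)
        (h1P.resolve_right na)
    -- (1,1)
    · exact absurd rfl hab
    -- (1,2)
    · exact pz12 (h1P.resolve_right na) (h2M.resolve_right nb) (h12.resolve_right na)
        (h13.resolve_right na)
    -- (1,3)
    · exact pzK3 (h30.resolve_right nb) (h31.resolve_right nb) (h12.resolve_right na)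
        (h13.resolve_right na)
    -- (2,0)
    · exact pz02 (h01.resolve_right nb) (h02.resolve_right nb) (h03.resolve_right nb)
        (h2M.resolve_right na)
    -- (2,1)
    · exact pz12 (h1P.resolve_right nb) (h2M.resolve_right na) (h12.resolve_right nb)
        (h13.resolve_right nb)
    -- (2,2)
    · exact absurd rfl hab
    -- (2,3)
    · exact pzK3 (h30.resolve_right nb) (h31.resolve_right nb) (h22.resolve_right na)
        (h23.resolve_right na)
    -- (3,0)
    · exact pzK3 (h30.resolve_right na) (h01.resolve_right nb) (h02.resolve_right nb)
        (h03.resolve_right nb)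
    -- (3,1)
    · exact pzK3 (h30.resolve_right na) (h31.resolve_right na) (h12.resolve_right nb)
        (h13.resolve_right nb)
    -- (3,2)
    · exact pzK3 (h30.resolve_right na) (h31.resolve_right na) (h22.resolve_right nb)
        (h23.resolve_right nb)
    -- (3,3)
    · exact absurd rfl hab
  refine ⟨?_, ?_, ⟨?_, ?_, ?_⟩, ⟨?_, ?_, ?_⟩, ?_⟩
  -- C1 : off-diagonal blocks vanish
  · intro i j a b hab
    by_cases qb : ∀ c, Q c b = 0
    · rw [qb a, mul_zero]
    by_cases qa : ∀ c, Q c a = 0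
    · rw [← hermQ a b, qa b, star_zero, mul_zero]
    · rw [PZ a b hab qa qb i j, zero_mul]
  -- C2 : block 0
  · intro i j hij
    by_cases q0 : ∀ c, Q c 0 = 0
    · rw [q0 0, mul_zero]
    have p1 := h01.resolve_right q0
    have p2 := h02.resolve_right q0
    have p3 := h03.resolve_right q0
    have colz : ∀ (i' j' : Fin 4), j' ≠ 0 → P i' j' = 0 := by
      intro i' j' hj'
      fin_cases j'
      · exact absurd rfl hj'
      · exact p1 i'
      · exact p2 i'
      · exact p3 i'
    by_cases hj : j = 0
    · subst hj
      have hi : i ≠ 0 := fun h => hij ⟨h, rfl⟩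
      rw [← hermP i 0, colz 0 i hi, star_zero, zero_mul]
    · rw [colz i j hj, zero_mul]
  -- C3a
  · intro i j hc
    by_cases q1 : ∀ c, Q c 1 = 0
    · rw [q1 1, mul_zero]
    have p2 := h12.resolve_right q1
    have p3 := h13.resolve_right q1
    have colz : ∀ (i' j' : Fin 4), (j' = 2 ∨ j' = 3) → P i' j' = 0 := by
      intro i' j' hj'
      rcases hj' with rfl | rfl
      · exact p2 i'
      · exact p3 i'
    rcases hc with hc | hc | hc | hc
    · rw [colz i j (Or.inl hc), zero_mul]
    · rw [colz i j (Or.inr hc), zero_mul]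
    · rw [← hermP i j, colz j i (Or.inl hc), star_zero, zero_mul]
    · rw [← hermP i j, colz j i (Or.inr hc), star_zero, zero_mul]
  -- C3b
  · intro i
    by_cases q1 : ∀ c, Q c 1 = 0
    · rw [q1 1, mul_zero, mul_zero, mul_zero]
    have r := h1P.resolve_right q1
    linear_combination (-(Q 1 1)) * r i
  -- C3c
  · intro j
    by_cases q1 : ∀ c, Q c 1 = 0
    · rw [q1 1, mul_zero, mul_zero, mul_zero]
    have r := h1P.resolve_right q1
    have hr : c3 * P j 0 = P j 1 := sub_eq_zero.mp (r j)
    have e : P 1 j = c3 * P 0 j := by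
      calc P 1 j = star (P j 1) := (hermP 1 j).symm
        _ = star (c3 * P j 0) := by rw [hr]
        _ = c3 * star (P j 0) := by rw [star_mul', star_c3, mul_comm]
        _ = c3 * P 0 j := by rw [hermP 0 j]
    rw [e]
    ring
  -- C4a
  · intro i j hc
    by_cases q2 : ∀ c, Q c 2 = 0
    · rw [q2 2, mul_zero]
    have p2 := h22.resolve_right q2
    have p3 := h23.resolve_right q2
    have colz : ∀ (i' j' : Fin 4), (j' = 2 ∨ j' = 3) → P i' j' = 0 := by
      intro i' j' hj'
      rcases hj' with rfl | rfl
      · exact p2 i'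
      · exact p3 i'
    rcases hc with hc | hc | hc | hc
    · rw [colz i j (Or.inl hc), zero_mul]
    · rw [colz i j (Or.inr hc), zero_mul]
    · rw [← hermP i j, colz j i (Or.inl hc), star_zero, zero_mul]
    · rw [← hermP i j, colz j i (Or.inr hc), star_zero, zero_mul]
  -- C4b
  · intro i
    by_cases q2 : ∀ c, Q c 2 = 0
    · rw [q2 2, mul_zero, mul_zero, mul_zero, neg_zero]
    have r := h2M.resolve_right q2
    linear_combination (Q 2 2) * r i
  -- C4c
  · intro j
    by_cases q2 : ∀ c, Q c 2 = 0
    · rw [q2 2, mul_zero, mul_zero, mul_zero, neg_zero]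
    have r := h2M.resolve_right q2
    have hr : P j 1 = -(c3 * P j 0) := by linear_combination r j
    have e : P 1 j = -(c3 * P 0 j) := by
      calc P 1 j = star (P j 1) := (hermP 1 j).symm
        _ = star (-(c3 * P j 0)) := by rw [hr]
        _ = -(c3 * star (P j 0)) := by rw [star_neg, star_mul', star_c3, mul_comm]
        _ = -(c3 * P 0 j) := by rw [hermP 0 j]
    rw [e]
    ring
  -- C5
  · intro i j hc
    by_cases q3 : ∀ c, Q c 3 = 0
    · rw [q3 3, mul_zero]
    have p0 := h30.resolve_right q3
    have p1 := h31.resolve_right q3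
    have colz : ∀ (i' j' : Fin 4), (j' = 0 ∨ j' = 1) → P i' j' = 0 := by
      intro i' j' hj'
      rcases hj' with rfl | rfl
      · exact p0 i'
      · exact p1 i'
    rcases hc with hc | hc | hc | hc
    · rw [colz i j (Or.inl hc), zero_mul]
    · rw [colz i j (Or.inr hc), zero_mul]
    · rw [← hermP i j, colz j i (Or.inl hc), star_zero, zero_mul]
    · rw [← hermP i j, colz j i (Or.inr hc), star_zero, zero_mul]

end Aux7
section Main
open Matrix

def gcP : Fin 4 → ℂ := ![1, c3, 0, 0]
def gcM : Fin 4 → ℂ := ![1, -c3, 0, 0]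

lemma gP_eq (j : Fin 4) : gPlus j = gcP j / 2 := by
  fin_cases j <;> simp [gPlus, gcP, c3] <;> ring

lemma gP_star (j : Fin 4) : star (gPlus j) = gcP j / 2 := by
  fin_cases j <;>
    simp [gPlus, gcP, c3, Complex.star_def, map_div₀, Complex.conj_ofReal] <;> ring

lemma gM_eq (j : Fin 4) : gMinus j = gcM j / 2 := by
  fin_cases j <;> simp [gMinus, gcM, c3, Matrix.vecHead, Matrix.vecTail] <;> ring

lemma gM_star (j : Fin 4) : star (gMinus j) = gcM j / 2 := by
  fin_cases j <;>
    simp [gMinus, gcM, c3, Complex.star_def, map_div₀, Complex.conj_ofReal,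
      Matrix.vecHead, Matrix.vecTail] <;> ring

lemma std_star (k j : Fin 4) : star (stdBasis4 k j) = stdBasis4 k j := by
  simp [stdBasis4, apply_ite]

lemma trace_std (i j : Fin 4) : (Matrix.single i j (1:ℂ)).trace = if i = j then 1 else 0 := by
  rcases eq_or_ne i j with rfl | h
  · simp [Matrix.trace, Matrix.diag, Matrix.single, Matrix.of_apply, Finset.sum_ite_eq]
  · simp only [Matrix.trace, Matrix.diag, Matrix.single, Matrix.of_apply]
    rw [Finset.sum_eq_zero, if_neg h]
    intro x _
    rw [if_neg]
    rintro ⟨rfl, rfl⟩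
    exact h rfl

/-- the trine-based QC map is an extreme point of the set of EBT maps
on `4 × 4` complex matrices. -/
theorem trine_channel_extreme_in_ebt :
    IsExtremePointOf IsEBT trineChannel := by
  refine ⟨trine_ebt, ?_⟩
  intro Φ₁ Φ₂ h1 h2 a ha0 ha1 heq
  have hlin1 : IsLinearMap ℂ Φ₁ := h1.1.1
  have hD1psd : (tensorId 4 Φ₁ (maxEnt 4)).PosSemidef := h1.1.2.1 4 (by norm_num) _ maxEnt_psd
  have hD2psd : (tensorId 4 Φ₂ (maxEnt 4)).PosSemidef := h2.1.2.1 4 (by norm_num) _ maxEnt_psd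
  have hC : ∀ p q, Cmat p q = (a : ℂ) * (tensorId 4 Φ₁ (maxEnt 4)) p q
      + ((1 - a : ℝ) : ℂ) * (tensorId 4 Φ₂ (maxEnt 4)) p q := by
    intro p q
    rw [← Ceq]
    show trineChannel (Matrix.of fun a' b' => maxEnt 4 (p.1, a') (q.1, b')) p.2 q.2 = _
    rw [heq]
    rfl
  obtain ⟨N, A, B, hA, hB, hC1⟩ := h1.2 4 (by norm_num) (maxEnt 4) maxEnt_psd
  -- dichotomy facts
  have dich : ∀ (u : Fin 4 → ℂ) (k : Fin 4),
      star (tvec u k) ⬝ᵥ Cmat.mulVec (tvec u k) = 0 →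
      ∀ m, (A m).mulVec u = 0 ∨ ∀ c, (B m) c k = 0 :=
    fun u k hq m => dichotomy hA hB hD2psd ha0 ha1 hC hC1 u k hq m
  have mulVec_std : ∀ (M : Matrix (Fin 4) (Fin 4) ℂ) (l : Fin 4),
      M.mulVec (stdBasis4 l) = fun i => M i l := by
    intro M l
    ext i
    simp [mulVec, dotProduct, stdBasis4, mul_ite, Finset.sum_ite_eq']
  have convS : ∀ m (l k : Fin 4), ((A m).mulVec (stdBasis4 l) = 0 ∨ ∀ c, (B m) c k = 0) →
      ((∀ i, (A m) i l = 0) ∨ (∀ c, (B m) c k = 0)) := by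
    intro m l k h
    rcases h with h | h
    · left
      intro i
      have h2 := congrFun h i
      rw [mulVec_std] at h2
      exact h2
    · exact Or.inr h
  have convP : ∀ m, ((A m).mulVec wP = 0 ∨ ∀ c, (B m) c 1 = 0) →
      ((∀ i, c3 * (A m) i 0 - (A m) i 1 = 0) ∨ (∀ c, (B m) c 1 = 0)) := by
    intro m h
    rcases h with h | h
    · left
      intro i
      have h2 := congrFun h i
      simp only [mulVec, dotProduct, wP, Fin.sum_univ_four, Matrix.cons_val_zero,
        Matrix.cons_val_one, Matrix.head_cons, Matrix.cons_val_two, Matrix.tail_cons,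
        Matrix.cons_val_three, Pi.zero_apply] at h2
      rw [show (0:ℂ) = 0 from rfl] at h2
      linear_combination h2
    · exact Or.inr h
  have convM : ∀ m, ((A m).mulVec wM = 0 ∨ ∀ c, (B m) c 2 = 0) →
      ((∀ i, c3 * (A m) i 0 + (A m) i 1 = 0) ∨ (∀ c, (B m) c 2 = 0)) := by
    intro m h
    rcases h with h | h
    · left
      intro i
      have h2 := congrFun h i
      simp only [mulVec, dotProduct, wM, Fin.sum_univ_four, Matrix.cons_val_zero,
        Matrix.cons_val_one, Matrix.head_cons, Matrix.cons_val_two, Matrix.tail_cons,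
        Matrix.cons_val_three, Pi.zero_apply] at h2
      linear_combination h2
    · exact Or.inr h
  have S := fun m => perterm (A m) (B m) (fun i j => (hA m).1.apply i j)
    (fun i j => (hB m).1.apply i j)
    (convS m 1 0 (dich (stdBasis4 1) 0 (qz0 1 (by decide)) m))
    (convS m 2 0 (dich (stdBasis4 2) 0 (qz0 2 (by decide)) m))
    (convS m 3 0 (dich (stdBasis4 3) 0 (qz0 3 (by decide)) m))
    (convP m (dich wP 1 qzP m))
    (convS m 2 1 (dich (stdBasis4 2) 1 (qz12e 2 (Or.inl rfl) 1 (Or.inl rfl)) m))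
    (convS m 3 1 (dich (stdBasis4 3) 1 (qz12e 3 (Or.inr rfl) 1 (Or.inl rfl)) m))
    (convM m (dich wM 2 qzM m))
    (convS m 2 2 (dich (stdBasis4 2) 2 (qz12e 2 (Or.inl rfl) 2 (Or.inr rfl)) m))
    (convS m 3 2 (dich (stdBasis4 3) 2 (qz12e 3 (Or.inr rfl) 2 (Or.inr rfl)) m))
    (convS m 0 3 (dich (stdBasis4 0) 3 (qz3 0 (Or.inl rfl)) m))
    (convS m 1 3 (dich (stdBasis4 1) 3 (qz3 1 (Or.inr rfl)) m))
  set D1 := tensorId 4 Φ₁ (maxEnt 4) with hD1def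
  have hD1e : ∀ (i a' j b' : Fin 4), D1 (i, a') (j, b') = ∑ m, (A m) i j * (B m) a' b' := by
    intro i a' j b'
    rw [hC1]
    simp [Matrix.sum_apply, kroneckerMap_apply]
  -- structural facts about D1
  have hoff : ∀ (i a' j b' : Fin 4), a' ≠ b' → D1 (i, a') (j, b') = 0 := by
    intro i a' j b' hab
    rw [hD1e]
    exact Finset.sum_eq_zero fun m _ => (S m).1 i j a' b' hab
  have h0z : ∀ i j : Fin 4, ¬(i = 0 ∧ j = 0) → D1 (i, 0) (j, 0) = 0 := by
    intro i j hij
    rw [hD1e]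
    exact Finset.sum_eq_zero fun m _ => (S m).2.1 i j hij
  have h1z : ∀ i j : Fin 4, (j = 2 ∨ j = 3 ∨ i = 2 ∨ i = 3) → D1 (i, 1) (j, 1) = 0 := by
    intro i j hij
    rw [hD1e]
    exact Finset.sum_eq_zero fun m _ => (S m).2.2.1.1 i j hij
  have h1c : ∀ i : Fin 4, D1 (i, 1) (1, 1) = c3 * D1 (i, 1) (0, 1) := by
    intro i
    rw [hD1e, hD1e, Finset.mul_sum]
    exact Finset.sum_congr rfl fun m _ => by
      have := (S m).2.2.1.2.1 i
      linear_combination this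
  have h1r : ∀ j : Fin 4, D1 (1, 1) (j, 1) = c3 * D1 (0, 1) (j, 1) := by
    intro j
    rw [hD1e, hD1e, Finset.mul_sum]
    exact Finset.sum_congr rfl fun m _ => by
      have := (S m).2.2.1.2.2 j
      linear_combination this
  have h2z : ∀ i j : Fin 4, (j = 2 ∨ j = 3 ∨ i = 2 ∨ i = 3) → D1 (i, 2) (j, 2) = 0 := by
    intro i j hij
    rw [hD1e]
    exact Finset.sum_eq_zero fun m _ => (S m).2.2.2.1.1 i j hij
  have h2c : ∀ i : Fin 4, D1 (i, 2) (1, 2) = -(c3 * D1 (i, 2) (0, 2)) := by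
    intro i
    rw [hD1e, hD1e, Finset.mul_sum, ← Finset.sum_neg_distrib]
    exact Finset.sum_congr rfl fun m _ => by
      have := (S m).2.2.2.1.2.1 i
      linear_combination this
  have h2r : ∀ j : Fin 4, D1 (1, 2) (j, 2) = -(c3 * D1 (0, 2) (j, 2)) := by
    intro j
    rw [hD1e, hD1e, Finset.mul_sum, ← Finset.sum_neg_distrib]
    exact Finset.sum_congr rfl fun m _ => by
      have := (S m).2.2.2.1.2.2 j
      linear_combination this
  have h3z : ∀ i j : Fin 4, (j = 0 ∨ j = 1 ∨ i = 0 ∨ i = 1) → D1 (i, 3) (j, 3) = 0 := by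
    intro i j hij
    rw [hD1e]
    exact Finset.sum_eq_zero fun m _ => (S m).2.2.2.2 i j hij
  have h1z2c : ∀ i : Fin 4, D1 (i, 1) (2, 1) = 0 := fun i => h1z i 2 (Or.inl rfl)
  have h1z3c : ∀ i : Fin 4, D1 (i, 1) (3, 1) = 0 := fun i => h1z i 3 (Or.inr (Or.inl rfl))
  have h1z2r : ∀ j : Fin 4, D1 (2, 1) (j, 1) = 0 := fun j => h1z 2 j (Or.inr (Or.inr (Or.inl rfl)))
  have h1z3r : ∀ j : Fin 4, D1 (3, 1) (j, 1) = 0 := fun j => h1z 3 j (Or.inr (Or.inr (Or.inr rfl)))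
  have h2z2c : ∀ i : Fin 4, D1 (i, 2) (2, 2) = 0 := fun i => h2z i 2 (Or.inl rfl)
  have h2z3c : ∀ i : Fin 4, D1 (i, 2) (3, 2) = 0 := fun i => h2z i 3 (Or.inr (Or.inl rfl))
  have h2z2r : ∀ j : Fin 4, D1 (2, 2) (j, 2) = 0 := fun j => h2z 2 j (Or.inr (Or.inr (Or.inl rfl)))
  have h2z3r : ∀ j : Fin 4, D1 (3, 2) (j, 2) = 0 := fun j => h2z 3 j (Or.inr (Or.inr (Or.inr rfl)))
  have h3z0c : ∀ i : Fin 4, D1 (i, 3) (0, 3) = 0 := fun i => h3z i 0 (Or.inl rfl)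
  have h3z1c : ∀ i : Fin 4, D1 (i, 3) (1, 3) = 0 := fun i => h3z i 1 (Or.inr (Or.inl rfl))
  have h3z0r : ∀ j : Fin 4, D1 (0, 3) (j, 3) = 0 := fun j => h3z 0 j (Or.inr (Or.inr (Or.inl rfl)))
  have h3z1r : ∀ j : Fin 4, D1 (1, 3) (j, 3) = 0 := fun j => h3z 1 j (Or.inr (Or.inr (Or.inr rfl)))
  -- trace-preservation equations
  have hchoi : ∀ (i a' j b' : Fin 4), D1 (i, a') (j, b') = 4⁻¹ * Φ₁ (Matrix.single i j 1) a' b' :=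
    fun i a' j b' => choi_entry hlin1 i j a' b'
  have htr : ∀ i j : Fin 4, (∑ x : Fin 4, D1 (i, x) (j, x)) = if i = j then 4⁻¹ else 0 := by
    intro i j
    have htp := h1.1.2.2 (Matrix.single i j 1)
    rw [trace_std] at htp
    calc (∑ x : Fin 4, D1 (i, x) (j, x))
        = ∑ x : Fin 4, 4⁻¹ * Φ₁ (Matrix.single i j 1) x x :=
          Finset.sum_congr rfl fun x _ => hchoi i x j x
      _ = 4⁻¹ * (Φ₁ (Matrix.single i j 1)).trace := by
          rw [Matrix.trace, Finset.mul_sum]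
          rfl
      _ = if i = j then 4⁻¹ else 0 := by
          rw [htp]
          split_ifs <;> norm_num
  -- explicit block values
  have hf0 : ∀ i j : Fin 4, D1 (i, 0) (j, 0) =
      (if i = 0 ∧ j = 0 then D1 (0, 0) (0, 0) else 0) := by
    intro i j
    by_cases h : i = 0 ∧ j = 0
    · obtain ⟨rfl, rfl⟩ := h
      rw [if_pos ⟨rfl, rfl⟩]
    · rw [if_neg h]
      exact h0z i j h
  have fourCases : ∀ i : Fin 4, i = 0 ∨ i = 1 ∨ i = 2 ∨ i = 3 := by
    intro i
    rcases i with ⟨iv, hv⟩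
    simp only [Fin.ext_iff]
    omega
  have hf1 : ∀ i j : Fin 4, D1 (i, 1) (j, 1) = gcP i * gcP j * D1 (0, 1) (0, 1) := by
    intro i j
    rcases fourCases i with rfl | rfl | rfl | rfl <;> rcases fourCases j with rfl | rfl | rfl | rfl
    · simp [gcP]
    · simp only [gcP, Matrix.cons_val_zero, Matrix.cons_val_one, Matrix.head_cons]
      linear_combination (h1c 0)
    · rw [h1z2c]; simp [gcP]
    · rw [h1z3c]; simp [gcP]
    · simp only [gcP, Matrix.cons_val_zero, Matrix.cons_val_one, Matrix.head_cons]
      linear_combination (h1r 0)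
    · simp only [gcP, Matrix.cons_val_zero, Matrix.cons_val_one, Matrix.head_cons]
      linear_combination (h1r 1) + c3 * (h1c 0)
    · rw [h1z2c]; simp [gcP]
    · rw [h1z3c]; simp [gcP]
    · rw [h1z2r]; simp [gcP]
    · rw [h1z2r]; simp [gcP]
    · rw [h1z2r]; simp [gcP]
    · rw [h1z2r]; simp [gcP]
    · rw [h1z3r]; simp [gcP]
    · rw [h1z3r]; simp [gcP]
    · rw [h1z3r]; simp [gcP]
    · rw [h1z3r]; simp [gcP]
  have hf2 : ∀ i j : Fin 4, D1 (i, 2) (j, 2) = gcM i * gcM j * D1 (0, 2) (0, 2) := by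
    intro i j
    rcases fourCases i with rfl | rfl | rfl | rfl <;> rcases fourCases j with rfl | rfl | rfl | rfl
    · simp [gcM]
    · simp only [gcM, Matrix.cons_val_zero, Matrix.cons_val_one, Matrix.head_cons]
      linear_combination (h2c 0)
    · rw [h2z2c]; simp [gcM]
    · rw [h2z3c]; simp [gcM]
    · simp only [gcM, Matrix.cons_val_zero, Matrix.cons_val_one, Matrix.head_cons]
      linear_combination (h2r 0)
    · simp only [gcM, Matrix.cons_val_zero, Matrix.cons_val_one, Matrix.head_cons]
      linear_combination (h2r 1) - c3 * (h2c 0)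
    · rw [h2z2c]; simp [gcM]
    · rw [h2z3c]; simp [gcM]
    · rw [h2z2r]; simp [gcM]
    · rw [h2z2r]; simp [gcM]
    · rw [h2z2r]; simp [gcM]
    · rw [h2z2r]; simp [gcM]
    · rw [h2z3r]; simp [gcM]
    · rw [h2z3r]; simp [gcM]
    · rw [h2z3r]; simp [gcM]
    · rw [h2z3r]; simp [gcM]
  -- block 3 values from trace preservation
  have v22 : D1 (2, 3) (2, 3) = 4⁻¹ := by
    have e := htr 2 2
    rw [Fin.sum_univ_four, h0z 2 2 (by decide), h1z 2 2 (by decide), h2z 2 2 (by decide)] at e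
    simpa using e
  have v33 : D1 (3, 3) (3, 3) = 4⁻¹ := by
    have e := htr 3 3
    rw [Fin.sum_univ_four, h0z 3 3 (by decide), h1z 3 3 (by decide), h2z 3 3 (by decide)] at e
    simpa using e
  have v23 : D1 (2, 3) (3, 3) = 0 := by
    have e := htr 2 3
    rw [Fin.sum_univ_four, h0z 2 3 (by decide), h1z 2 3 (by decide), h2z 2 3 (by decide)] at e
    simpa using e
  have v32 : D1 (3, 3) (2, 3) = 0 := by
    have e := htr 3 2
    rw [Fin.sum_univ_four, h0z 3 2 (by decide), h1z 3 2 (by decide), h2z 3 2 (by decide)] at e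
    simpa using e
  -- the three scalars
  have eqA : D1 (0, 0) (0, 0) + D1 (0, 1) (0, 1) + D1 (0, 2) (0, 2) = 4⁻¹ := by
    have e := htr 0 0
    rw [Fin.sum_univ_four, h3z 0 0 (by decide)] at e
    simp at e
    linear_combination e
  have eqB : c3 * D1 (0, 1) (0, 1) - c3 * D1 (0, 2) (0, 2) = 0 := by
    have e := htr 0 1
    rw [Fin.sum_univ_four, h0z 0 1 (by decide), h1c 0, h2c 0, h3z 0 1 (by decide)] at e
    have hz1 : D1 (0, 1) (0, 1) = D1 (0, 1) (0, 1) := rfl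
    simp at e
    -- e : c3 * D1 (0,1)(0,1) + -(c3 * D1 (0,2)(0,2)) = 0  (roughly)
    linear_combination e
  have eqC : c3 * c3 * D1 (0, 1) (0, 1) + c3 * c3 * D1 (0, 2) (0, 2) = 4⁻¹ := by
    have e := htr 1 1
    rw [Fin.sum_univ_four, h0z 1 1 (by decide), hf1 1 1, hf2 1 1, h3z 1 1 (by decide)] at e
    simp only [gcP, gcM, Matrix.cons_val_one, Matrix.head_cons] at e
    simp at e
    linear_combination e
  have hsr : D1 (0, 1) (0, 1) = D1 (0, 2) (0, 2) := by
    have h := mul_eq_zero.mp (show c3 * (D1 (0, 1) (0, 1) - D1 (0, 2) (0, 2)) = 0 by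
      linear_combination eqB)
    rcases h with h | h
    · exact absurd h c3_ne
    · exact sub_eq_zero.mp h
  have h3' : (3 : ℂ) * D1 (0, 1) (0, 1) + 3 * D1 (0, 2) (0, 2) = 4⁻¹ := by
    linear_combination eqC - (D1 (0, 1) (0, 1) + D1 (0, 2) (0, 2)) * c3_mul_c3
  have hSv : D1 (0, 1) (0, 1) = 1 / 24 := by
    linear_combination (1 / 6) * h3' + (1 / 2) * hsr
  have hRv : D1 (0, 2) (0, 2) = 1 / 24 := by
    linear_combination hSv - hsr
  have hTv : D1 (0, 0) (0, 0) = 1 / 6 := by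
    linear_combination eqA - hSv - hRv
  -- conclude : the Choi matrix of Φ₁ is that of the trine channel
  have hD1C : D1 = Cmat := by
    ext p q
    obtain ⟨i, a'⟩ := p
    obtain ⟨j, b'⟩ := q
    by_cases hab : a' = b'
    · subst hab
      rcases fourCases a' with rfl | rfl | rfl | rfl
      · rw [hf0 i j]
        have hc : Cmat (i, 0) (j, 0) = 4⁻¹ * ((2 / 3) * (stdBasis4 0 j * stdBasis4 0 i)) := by
          simp [Cmat, trinePOVM, rankOne, vecMulVec_apply, std_star]
          try ring
        rw [hc]
        by_cases hi : i = 0 <;> by_cases hj : j = 0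
        · subst hi
          subst hj
          rw [if_pos ⟨rfl, rfl⟩, hTv]
          simp [stdBasis4]
          norm_num
        · rw [if_neg fun h => hj h.2]
          simp [hj, stdBasis4]
        · rw [if_neg fun h => hi h.1]
          simp [hi, stdBasis4]
        · rw [if_neg fun h => hi h.1]
          simp [hi, hj, stdBasis4]
      · rw [hf1 i j, hSv]
        have hc : Cmat (i, 1) (j, 1) = 4⁻¹ * ((2 / 3) * (gPlus j * star (gPlus i))) := by
          simp [Cmat, trinePOVM, rankOne, vecMulVec_apply]
          try ring
        rw [hc, gP_eq j, gP_star i]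
        ring
      · rw [hf2 i j, hRv]
        have hc : Cmat (i, 2) (j, 2) = 4⁻¹ * ((2 / 3) * (gMinus j * star (gMinus i))) := by
          simp [Cmat, trinePOVM, rankOne, vecMulVec_apply]
          try ring
        rw [hc, gM_eq j, gM_star i]
        ring
      · have hc : Cmat (i, 3) (j, 3)
            = 4⁻¹ * (stdBasis4 2 j * stdBasis4 2 i + stdBasis4 3 j * stdBasis4 3 i) := by
          simp [Cmat, trinePOVM, rankOne, vecMulVec_apply, Matrix.add_apply, std_star]
          try ring
        rw [hc]
        rcases fourCases i with rfl | rfl | rfl | rfl <;>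
          rcases fourCases j with rfl | rfl | rfl | rfl <;>
          first
            | (rw [h3z0c]; try simp [stdBasis4])
            | (rw [h3z1c]; try simp [stdBasis4])
            | (rw [h3z0r]; try simp [stdBasis4])
            | (rw [h3z1r]; try simp [stdBasis4])
            | simp [stdBasis4, v22, v23, v32, v33]
    · rw [hoff i a' j b' hab]
      simp [Cmat, hab]
  have hPhi1 : Φ₁ = trineChannel :=
    linmap_eq_of_choi_eq hlin1 trine_linear (hD1C.trans Ceq.symm)
  refine ⟨hPhi1, ?_⟩
  funext ρ
  ext a' b'
  have hca : ((1 - a : ℝ) : ℂ) = 1 - (a : ℂ) := by push_cast; ring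
  have hent : trineChannel ρ a' b' = (a : ℂ) * trineChannel ρ a' b'
      + ((1 - a : ℝ) : ℂ) * Φ₂ ρ a' b' := by
    have h := congrFun heq ρ
    rw [hPhi1] at h
    have h2 := congrFun (congrFun h a') b'
    simpa [Matrix.add_apply, Matrix.smul_apply, smul_eq_mul] using h2
  have hne : (1 : ℂ) - (a : ℂ) ≠ 0 := by
    intro hcon
    have h3 : (a : ℂ) = 1 := by linear_combination -hcon
    have h4 : a = 1 := by exact_mod_cast h3
    linarith
  rw [hca] at hent
  have hfin : (1 - (a : ℂ)) * Φ₂ ρ a' b' = (1 - (a : ℂ)) * trineChannel ρ a' b' := by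
    linear_combination -hent
  exact mul_left_cancel₀ hne hfin

end Main
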